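/- Let S be a regular ring, 𝔭 ⊂ S a prime, f(Z) ∈ S[Z] a monic polynomial of degree N all of whose coefficients a_j of Z^{N−j} satisfy ν_𝔭(a_j) ≥ j (i.e. a_j ∈ 𝔭^{(j)}), and set B' = S[Z]/⟨f⟩ localized appropriately. If θ denotes the class of Z in B', then θ is integral over the ideal 𝔭B', and consequently every prime Q of B' containing 𝔭B' contains θ; in particular 𝔭B' + ⟨θ⟩ is the unique prime of B' lying over 𝔭 whenever B'/(𝔭B' + ⟨θ⟩) ≅ S/𝔭 is a domain. -/
import Mathlib


open IsLocalRing Polynomial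

/-- An element `x` is integral over an ideal `I` if it satisfies an equation
`x^N + a₁ x^{N-1} + ⋯ + a_N = 0` with `a_j ∈ I^j`. -/
def IsIntegralOverIdeal {R : Type*} [CommRing R] (I : Ideal R) (x : R) : Prop :=
  ∃ (N : ℕ) (a : ℕ → R), 0 < N ∧ (∀ j ∈ Finset.Icc 1 N, a j ∈ I ^ j) ∧
    x ^ N + ∑ j ∈ Finset.Icc 1 N, a j * x ^ (N - j) = 0

/-- A (Noetherian) local ring is regular if its Krull dimension equals its embedding
dimension, the dimension of the cotangent space over the residue field. -/
def IsRegularLocal (R : Type*) [CommRing R] [IsLocalRing R] : Prop :=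
  IsNoetherianRing R ∧
    ringKrullDim R = (Module.finrank (ResidueField R) (CotangentSpace R) : WithBot (WithTop ℕ))

/-- A commutative ring is regular if all its localizations at primes are regular local rings. -/
def RegularRing (R : Type*) [CommRing R] : Prop :=
  ∀ (P : Ideal R) (h : P.IsPrime),
    letI := h
    IsRegularLocal (Localization.AtPrime P)

theorem key_igupa
    (R : Type*) [CommRing R] [IsLocalRing R]
    (B' : Type*) [CommRing B'] [Algebra R B']
    (g : Polynomial R) (N : ℕ) (hN : 0 < N) (hgmonic : g.Monic) (hgdeg : g.natDegree = N)
    (hco : ∀ j ∈ Finset.Icc 1 N, g.coeff (N - j) ∈ (maximalIdeal R) ^ j)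
    (e : (Polynomial R ⧸ Ideal.span {g}) ≃ₐ[R] B') :
    IsIntegralOverIdeal ((maximalIdeal R).map (algebraMap R B'))
      (e (Ideal.Quotient.mk _ Polynomial.X))
    ∧ (∀ (Q : Ideal B'), Q.IsPrime →
        (maximalIdeal R).map (algebraMap R B') ≤ Q →
        e (Ideal.Quotient.mk _ Polynomial.X) ∈ Q)
    ∧ (((maximalIdeal R).map (algebraMap R B')
          ⊔ Ideal.span {e (Ideal.Quotient.mk _ Polynomial.X)}).IsPrime →
        ∀ (Q : Ideal B'), Q.IsPrime →
          Q.comap (algebraMap R B') = maximalIdeal R →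
          Q = (maximalIdeal R).map (algebraMap R B')
            ⊔ Ideal.span {e (Ideal.Quotient.mk _ Polynomial.X)}) := by
  set ψ := algebraMap R B' with hψ
  set θ := e (Ideal.Quotient.mk (Ideal.span {g}) X) with hθ
  set mB' := (maximalIdeal R).map ψ with hmB'
  set a : ℕ → B' := fun j => ψ (g.coeff (N - j)) with ha
  have hamem : ∀ j ∈ Finset.Icc 1 N, a j ∈ mB' ^ j := by
    intro j hj
    rw [hmB', ← Ideal.map_pow]
    exact Ideal.mem_map_of_mem ψ (hco j hj)
  have heq : θ ^ N + ∑ j ∈ Finset.Icc 1 N, a j * θ ^ (N - j) = 0 := by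
    have h0 : (Polynomial.aeval θ) g = 0 := by
      have h1 : Polynomial.aeval ((Ideal.Quotient.mkₐ R (Ideal.span {g})) X) g = 0 := by
        rw [Polynomial.aeval_algHom_apply, Polynomial.aeval_X_left_apply]
        rw [show (Ideal.Quotient.mkₐ R (Ideal.span {g})) g = 0 from
          Ideal.Quotient.eq_zero_iff_mem.mpr (Ideal.subset_span rfl)]
      have h2 := Polynomial.aeval_algHom_apply e.toAlgHom
        ((Ideal.Quotient.mkₐ R (Ideal.span {g})) X) g
      rw [h1, map_zero] at h2
      exact h2
    rw [Polynomial.aeval_eq_sum_range (p := g) θ, hgdeg, Finset.sum_range_succ] at h0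
    rw [← h0]
    have hre : ∀ c : ℕ → B',
        ∑ j ∈ Finset.Icc 1 N, c (N - j) = ∑ i ∈ Finset.range N, c i := by
      intro c
      apply Finset.sum_nbij' (fun j => N - j) (fun i => N - i)
      · intro j hj; simp only [Finset.mem_Icc] at hj; simp only [Finset.mem_range]; omega
      · intro i hi; simp only [Finset.mem_range] at hi; simp only [Finset.mem_Icc]; omega
      · intro j hj; simp only [Finset.mem_Icc] at hj; omega
      · intro i hi; simp only [Finset.mem_range] at hi; omega
      · intro j hj; rfl
    have hsum : ∑ j ∈ Finset.Icc 1 N, a j * θ ^ (N - j)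
        = ∑ i ∈ Finset.range N, g.coeff i • θ ^ i := by
      rw [← hre (fun i => g.coeff i • θ ^ i)]
      refine Finset.sum_congr rfl fun j hj => ?_
      simp only [ha, Algebra.smul_def, hψ]
    rw [hsum, show g.coeff N • θ ^ N = θ ^ N by
      rw [← hgdeg, hgmonic.coeff_natDegree, one_smul]]
    ring
  have part2 : ∀ (Q : Ideal B'), Q.IsPrime → mB' ≤ Q → θ ∈ Q := by
    intro Q hQ hle
    have hθN : θ ^ N ∈ mB' := by
      have h : θ ^ N = -∑ j ∈ Finset.Icc 1 N, a j * θ ^ (N - j) := by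
        rw [eq_neg_iff_add_eq_zero]; exact heq
      rw [h]
      refine neg_mem (Ideal.sum_mem _ fun j hj => Ideal.mul_mem_right _ _ ?_)
      have hj1 : 1 ≤ j := (Finset.mem_Icc.mp hj).1
      exact Ideal.pow_le_self (by omega) (hamem j hj)
    exact hQ.mem_of_pow_mem N (hle hθN)
  refine ⟨⟨N, a, hN, hamem, heq⟩, part2, ?_⟩
  intro hMprime Q hQ hQcomap
  set M := mB' ⊔ Ideal.span {θ} with hM
  have hdecomp : ∀ b : B', ∃ (c : R) (w : B'), b = ψ c + θ * w := by
    intro b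
    obtain ⟨y, hy⟩ := e.surjective b
    obtain ⟨p, hp⟩ := Ideal.Quotient.mk_surjective y
    refine ⟨p.coeff 0, e (Ideal.Quotient.mk _ p.divX), ?_⟩
    rw [← hy, ← hp]
    conv_lhs => rw [← p.divX_mul_X_add]
    rw [RingHom.map_add, RingHom.map_mul, map_add, map_mul]
    rw [show e ((Ideal.Quotient.mk (Ideal.span {g})) (C (p.coeff 0))) = ψ (p.coeff 0) from
      e.commutes (p.coeff 0)]
    ring
  have hmax : M.IsMaximal := by
    apply Ideal.Quotient.maximal_of_isField
    haveI : Nontrivial (B' ⧸ M) := Ideal.Quotient.nontrivial_iff.mpr hMprime.ne_top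
    refine ⟨exists_pair_ne _, mul_comm, ?_⟩
    intro x hx
    obtain ⟨b, rfl⟩ := Ideal.Quotient.mk_surjective x
    obtain ⟨c, w, rfl⟩ := hdecomp b
    have hθM : θ ∈ M := Ideal.mem_sup_right (Ideal.subset_span rfl)
    have hc : c ∉ maximalIdeal R := by
      intro hcmem
      apply hx
      rw [Ideal.Quotient.eq_zero_iff_mem]
      exact add_mem (Ideal.mem_sup_left (Ideal.mem_map_of_mem ψ hcmem))
        (Ideal.mul_mem_right _ _ hθM)
    have hu : IsUnit c := by
      by_contra h
      exact hc ((IsLocalRing.mem_maximalIdeal c).mpr h)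
    obtain ⟨u, hu⟩ := hu.map ψ
    have hmk : (Ideal.Quotient.mk M) (ψ c + θ * w) = (Ideal.Quotient.mk M) (ψ c) := by
      rw [map_add, Ideal.Quotient.eq_zero_iff_mem.mpr
        (Ideal.mul_mem_right _ _ hθM : θ * w ∈ M), add_zero]
    refine ⟨Ideal.Quotient.mk M (↑u⁻¹), ?_⟩
    rw [hmk, ← hu, ← map_mul, Units.mul_inv, map_one]
  have hPQ : mB' ≤ Q := by
    rw [hmB', Ideal.map_le_iff_le_comap, hQcomap]
  have hMQ : M ≤ Q := sup_le hPQ ((Ideal.span_le).mpr (by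
    intro x hx; rw [Set.mem_singleton_iff] at hx; rw [hx]; exact part2 Q hQ hPQ))
  exact (hmax.eq_of_le hQ.ne_top hMQ).symm

/-- Let `S` be a regular ring, `𝔭 ⊂ S` a prime, and `f ∈ S[Z]` monic of degree `N` whose
coefficient `a_j` of `Z^{N-j}` has `ν_𝔭(a_j) ≥ j` (i.e. lies in the `j`-th symbolic power).
In `B' = S_𝔭[Z]/⟨f⟩`, the class `θ` of `Z` is integral over `𝔭B'`, so every prime of `B'`
containing `𝔭B'` contains `θ`; in particular `𝔭B' + ⟨θ⟩` is the unique prime of `B'`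
lying over `𝔭` whenever `B'/(𝔭B' + ⟨θ⟩) ≅ S/𝔭` is a domain. -/
theorem integral_generator_unique_prime_above
    (S : Type*) [CommRing S] [IsDomain S] [IsNoetherianRing S] (hregS : RegularRing S)
    (𝔭 : Ideal S) [𝔭.IsPrime]
    (N : ℕ) (hN : 0 < N) (f : Polynomial S) (hmonic : f.Monic) (hdeg : f.natDegree = N)
    (hcoeff : ∀ j ∈ Finset.Icc 1 N,
      algebraMap S (Localization.AtPrime 𝔭) (f.coeff (N - j))
        ∈ (𝔭.map (algebraMap S (Localization.AtPrime 𝔭))) ^ j) :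
    ∀ (B' : Type*) [CommRing B'] [Algebra (Localization.AtPrime 𝔭) B'],
    ∀ e : (Polynomial (Localization.AtPrime 𝔭) ⧸
        Ideal.span {f.map (algebraMap S (Localization.AtPrime 𝔭))}) ≃ₐ[Localization.AtPrime 𝔭] B',
    letI θ := e (Ideal.Quotient.mk _ Polynomial.X)
    letI 𝔭B' := 𝔭.map ((algebraMap (Localization.AtPrime 𝔭) B').comp
      (algebraMap S (Localization.AtPrime 𝔭)))
    IsIntegralOverIdeal 𝔭B' θ
      ∧ (∀ (Q : Ideal B'), Q.IsPrime → 𝔭B' ≤ Q → θ ∈ Q)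
      ∧ ((𝔭B' ⊔ Ideal.span {θ}).IsPrime →
          ∀ (Q : Ideal B'), Q.IsPrime →
            Q.comap ((algebraMap (Localization.AtPrime 𝔭) B').comp
              (algebraMap S (Localization.AtPrime 𝔭))) = 𝔭 →
            Q = 𝔭B' ⊔ Ideal.span {θ}) := by
  intro B' _ _ e
  have h := key_igupa (Localization.AtPrime 𝔭) B'
    (f.map (algebraMap S (Localization.AtPrime 𝔭))) N hN
    (hmonic.map _) (by rw [hmonic.natDegree_map]; exact hdeg)
    (fun j hj => by
      rw [Polynomial.coeff_map, ← Localization.AtPrime.map_eq_maximalIdeal]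
      exact hcoeff j hj) e
  have hEq : (maximalIdeal (Localization.AtPrime 𝔭)).map
        (algebraMap (Localization.AtPrime 𝔭) B')
      = 𝔭.map ((algebraMap (Localization.AtPrime 𝔭) B').comp
        (algebraMap S (Localization.AtPrime 𝔭))) := by
    rw [← Ideal.map_map, Localization.AtPrime.map_eq_maximalIdeal]
  rw [hEq] at h
  refine ⟨h.1, h.2.1, ?_⟩
  intro hM Q hQ hc
  refine h.2.2 hM Q hQ ?_
  have h1 : Ideal.map (algebraMap S (Localization.AtPrime 𝔭))
      (Ideal.comap (algebraMap S (Localization.AtPrime 𝔭))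
        (Ideal.comap (algebraMap (Localization.AtPrime 𝔭) B') Q))
      = Ideal.comap (algebraMap (Localization.AtPrime 𝔭) B') Q :=
    IsLocalization.map_comap 𝔭.primeCompl _ _
  rw [← Ideal.comap_comap] at hc
  rw [← h1, hc, Localization.AtPrime.map_eq_maximalIdeal]
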